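/- arXiv:2101.08364 — 3 statements merged into one kernel-verified Lean document; each statement's English description precedes it below -/
import Mathlib

section
/- Modular factorization: let →1 = e→1 ∪ i→1 and →2 = e→2 ∪ i→2 be relations on a set A such that F(e→1, i→1) and F(e→2, i→2) hold. Set e→ := e→1 ∪ e→2 and i→ := i→1 ∪ i→2. If the linear swaps i→1 · e→2 ⊆ e→2 · →1* and i→2 · e→1 ⊆ e→1 · →2* hold, then the union →1 ∪ →2 fulfills factorization F(e→, i→). -/
/-!
An `→₁`-step followed by `e→*` can be commuted into `e→* · →₁*`: an `e→₁`-step is absorbed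
into `→₁*`, and in front of an `e→₂`-step, `F(e→₁, i→₁)` reorders `→₁*` into `e→₁* · i→₁*`,
after which the linear swap moves `e→₂` in front of the `i→₁*` block. Factorizing the
resulting `→₁*` by `F(e→₁, i→₁)` once more shows that `→₁ · e→* · i→* ⊆ e→* · i→*`, and
symmetrically for `→₂`; an induction along a `(→₁ ∪ →₂)`-path concludes.
-/

namespace Relation

local infixr:80 " ∘r " => Relation.Comp

variable {α : Type*}

/-- The e-factorization property `F(e, i)`. -/
def Factorizes (e i : α → α → Prop) : Prop :=
  ReflTransGen (e ⊔ i) ≤ ReflTransGen e ∘r ReflTransGen i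

theorem reflTransGen_comp_le_of_comp_le {i e r : α → α → Prop}
    (h : i ∘r e ≤ e ∘r ReflTransGen r) : ReflTransGen i ∘r e ≤ e ∘r ReflTransGen r := by
  rintro t s ⟨u, htu, hus⟩
  induction htu using ReflTransGen.head_induction_on with
  | refl => exact ⟨s, hus, .refl⟩
  | head hi _ ih =>
    obtain ⟨v, hv, hvs⟩ := ih
    obtain ⟨w, hw, hwv⟩ := h _ _ ⟨_, hi, hv⟩
    exact ⟨w, hw, hwv.trans hvs⟩

theorem comp_reflTransGen_le_of_comp_le {p s : α → α → Prop}
    (h : p ∘r s ≤ ReflTransGen s ∘r p) : p ∘r ReflTransGen s ≤ ReflTransGen s ∘r p := by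
  rintro t v ⟨u, htu, huv⟩
  induction huv using ReflTransGen.head_induction_on generalizing t with
  | refl => exact ⟨t, .refl, htu⟩
  | head hs _ ih =>
    obtain ⟨a, hta, hau⟩ := h _ _ ⟨_, htu, hs⟩
    obtain ⟨b, hab, hbv⟩ := ih a hau
    exact ⟨b, hta.trans hab, hbv⟩

variable {e₁ i₁ e₂ i₂ : α → α → Prop}

theorem Factorizes.reflTransGen_comp_le (hF : Factorizes e₁ i₁)
    (hswap : i₁ ∘r e₂ ≤ e₂ ∘r ReflTransGen (e₁ ⊔ i₁)) :
    ReflTransGen (e₁ ⊔ i₁) ∘r ReflTransGen (e₁ ⊔ e₂) ≤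
      ReflTransGen (e₁ ⊔ e₂) ∘r ReflTransGen (e₁ ⊔ i₁) := by
  refine comp_reflTransGen_le_of_comp_le ?_
  rintro t v ⟨u, htu, he₁ | he₂⟩
  · exact ⟨t, .refl, htu.tail (Or.inl he₁)⟩
  · obtain ⟨a, hta, hau⟩ := hF _ _ htu
    obtain ⟨b, hab, hbv⟩ := reflTransGen_comp_le_of_comp_le hswap _ _ ⟨u, hau, he₂⟩
    exact ⟨b, (ReflTransGen.mono le_sup_left _ _ hta).tail (Or.inr hab), hbv⟩

theorem Factorizes.comp_factorization_le (hF : Factorizes e₁ i₁)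
    (hswap : i₁ ∘r e₂ ≤ e₂ ∘r ReflTransGen (e₁ ⊔ i₁)) :
    (e₁ ⊔ i₁) ∘r ReflTransGen (e₁ ⊔ e₂) ∘r ReflTransGen (i₁ ⊔ i₂) ≤
      ReflTransGen (e₁ ⊔ e₂) ∘r ReflTransGen (i₁ ⊔ i₂) := by
  rintro t s ⟨u, htu, v, huv, hvs⟩
  obtain ⟨w, htw, hwv⟩ := hF.reflTransGen_comp_le hswap _ _ ⟨u, .single htu, huv⟩
  obtain ⟨x, hwx, hxv⟩ := hF _ _ hwv
  exact ⟨x, htw.trans (ReflTransGen.mono le_sup_left _ _ hwx),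
    (ReflTransGen.mono le_sup_left _ _ hxv).trans hvs⟩

theorem Factorizes.sup (hF₁ : Factorizes e₁ i₁) (hF₂ : Factorizes e₂ i₂)
    (hswap₁ : i₁ ∘r e₂ ≤ e₂ ∘r ReflTransGen (e₁ ⊔ i₁))
    (hswap₂ : i₂ ∘r e₁ ≤ e₁ ∘r ReflTransGen (e₂ ⊔ i₂)) :
    Factorizes (e₁ ⊔ e₂) (i₁ ⊔ i₂) := by
  have step₂ := hF₂.comp_factorization_le (i₂ := i₁) hswap₂
  rw [sup_comm e₂ e₁, sup_comm i₂ i₁] at step₂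
  intro t s hts
  rw [sup_sup_sup_comm] at hts
  induction hts using ReflTransGen.head_induction_on with
  | refl => exact ⟨s, .refl, .refl⟩
  | head htu _ ih =>
    rcases htu with h₁ | h₂
    · exact hF₁.comp_factorization_le hswap₁ _ _ ⟨_, h₁, ih⟩
    · exact step₂ _ _ ⟨_, h₂, ih⟩

end Relation

/-- Modular factorization: if `→1 = e→1 ∪ i→1` and `→2 = e→2 ∪ i→2` both e-factorize
and the linear swaps `i→1 · e→2 ⊆ e→2 · →1*` and `i→2 · e→1 ⊆ e→1 · →2*` hold, then
the union `→1 ∪ →2` fulfills factorization `F(e→1 ∪ e→2, i→1 ∪ i→2)`. -/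
theorem modular_factorization {A : Type*} (e1 i1 e2 i2 : A → A → Prop)
    (F1 : ∀ t s, Relation.ReflTransGen (fun a b => e1 a b ∨ i1 a b) t s →
        Relation.Comp (Relation.ReflTransGen e1) (Relation.ReflTransGen i1) t s)
    (F2 : ∀ t s, Relation.ReflTransGen (fun a b => e2 a b ∨ i2 a b) t s →
        Relation.Comp (Relation.ReflTransGen e2) (Relation.ReflTransGen i2) t s)
    (swap1 : ∀ t u s, i1 t u → e2 u s →
        Relation.Comp e2 (Relation.ReflTransGen (fun a b => e1 a b ∨ i1 a b)) t s)
    (swap2 : ∀ t u s, i2 t u → e1 u s →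
        Relation.Comp e1 (Relation.ReflTransGen (fun a b => e2 a b ∨ i2 a b)) t s) :
    ∀ t s, Relation.ReflTransGen
        (fun a b => (e1 a b ∨ i1 a b) ∨ (e2 a b ∨ i2 a b)) t s →
      Relation.Comp (Relation.ReflTransGen (fun a b => e1 a b ∨ e2 a b))
        (Relation.ReflTransGen (fun a b => i1 a b ∨ i2 a b)) t s := by
  have h := Relation.Factorizes.sup F1 F2
    (fun t s ⟨_, hi, he⟩ => swap1 t _ s hi he) (fun t s ⟨_, hi, he⟩ => swap2 t _ s hi he)
  rwa [Relation.Factorizes, ← sup_sup_sup_comm] at h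
end

section
/- Simulation of CbN in the bang calculus: for every λ-term t and operator o ∈ O: (soundness) if t →β t' then t^n →!β t'^n, and if t →o t' then t^n →o t'^n; (completeness) if t^n →!β S then there is a λ-term t' with S = t'^n and t →β t', and if t^n →o S then there is a λ-term t' with S = t'^n and t →o t'. -/
namespace BangPaper

/-- λ-terms with operators `O`, each with arity `ar o`. -/
inductive Lam (O : Type) (ar : O → ℕ) : Type
  | var : ℕ → Lam O ar
  | lam : ℕ → Lam O ar → Lam O ar
  | app : Lam O ar → Lam O ar → Lam O ar
  | op  : (o : O) → (Fin (ar o) → Lam O ar) → Lam O ar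

/-- Terms of the bang calculus `Λ!O`. -/
inductive BT (O : Type) (ar : O → ℕ) : Type
  | var : ℕ → BT O ar
  | lam : ℕ → BT O ar → BT O ar
  | app : BT O ar → BT O ar → BT O ar
  | bang : BT O ar → BT O ar
  | op  : (o : O) → (Fin (ar o) → BT O ar) → BT O ar

variable {O : Type} {ar : O → ℕ}

/-- Values: variables and abstractions. -/
def Lam.isValue : Lam O ar → Prop
  | .var _ => True
  | .lam _ _ => True
  | _ => False

/-- Substitution `t[u/x]` on λ-terms. -/
def Lam.subst : Lam O ar → ℕ → Lam O ar → Lam O ar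
  | .var y, x, u => if y = x then u else .var y
  | .lam y t, x, u => if y = x then .lam y t else .lam y (Lam.subst t x u)
  | .app t s, x, u => .app (Lam.subst t x u) (Lam.subst s x u)
  | .op o ts, x, u => .op o (fun i => Lam.subst (ts i) x u)

/-- Substitution `T[S/x]` on bang-calculus terms. -/
def BT.subst : BT O ar → ℕ → BT O ar → BT O ar
  | .var y, x, u => if y = x then u else .var y
  | .lam y t, x, u => if y = x then .lam y t else .lam y (BT.subst t x u)
  | .app t s, x, u => .app (BT.subst t x u) (BT.subst s x u)
  | .bang t, x, u => .bang (BT.subst t x u)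
  | .op o ts, x, u => .op o (fun i => BT.subst (ts i) x u)

/-- One-hole contexts for λ-terms. -/
inductive LCtx (O : Type) (ar : O → ℕ) : Type
  | hole : LCtx O ar
  | lam  : ℕ → LCtx O ar → LCtx O ar
  | appL : LCtx O ar → Lam O ar → LCtx O ar
  | appR : Lam O ar → LCtx O ar → LCtx O ar
  | op   : (o : O) → (Fin (ar o) → Lam O ar) → Fin (ar o) → LCtx O ar → LCtx O ar

/-- One-hole contexts for bang-calculus terms. -/
inductive BCtx (O : Type) (ar : O → ℕ) : Type
  | hole : BCtx O ar
  | lam  : ℕ → BCtx O ar → BCtx O ar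
  | appL : BCtx O ar → BT O ar → BCtx O ar
  | appR : BT O ar → BCtx O ar → BCtx O ar
  | bang : BCtx O ar → BCtx O ar
  | op   : (o : O) → (Fin (ar o) → BT O ar) → Fin (ar o) → BCtx O ar → BCtx O ar

/-- Plugging a λ-term in a λ-context. -/
def LCtx.plug : LCtx O ar → Lam O ar → Lam O ar
  | .hole, t => t
  | .lam x c, t => .lam x (LCtx.plug c t)
  | .appL c s, t => .app (LCtx.plug c t) s
  | .appR s c, t => .app s (LCtx.plug c t)
  | .op o ts i c, t => .op o (Function.update ts i (LCtx.plug c t))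

/-- CbN level of a λ-context. -/
def LCtx.levN : LCtx O ar → ℕ
  | .hole => 0
  | .lam _ c => LCtx.levN c
  | .appL c _ => LCtx.levN c
  | .appR _ c => LCtx.levN c + 1
  | .op _ _ _ c => LCtx.levN c + 1

/-- CbV level of a λ-context. -/
def LCtx.levV : LCtx O ar → ℕ
  | .hole => 0
  | .lam _ c => LCtx.levV c + 1
  | .appL (.lam _ c') _ => LCtx.levV c'
  | .appL c _ => LCtx.levV c
  | .appR _ c => LCtx.levV c
  | .op _ _ _ c => LCtx.levV c + 1

/-- Plugging a bang-term in a bang-context. -/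
def BCtx.plug : BCtx O ar → BT O ar → BT O ar
  | .hole, t => t
  | .lam x c, t => .lam x (BCtx.plug c t)
  | .appL c s, t => .app (BCtx.plug c t) s
  | .appR s c, t => .app s (BCtx.plug c t)
  | .bang c, t => .bang (BCtx.plug c t)
  | .op o ts i c, t => .op o (Function.update ts i (BCtx.plug c t))

/-- Bang-calculus level of a context. -/
def BCtx.lev : BCtx O ar → ℕ
  | .hole => 0
  | .lam _ c => BCtx.lev c
  | .appL c _ => BCtx.lev c
  | .appR _ c => BCtx.lev c
  | .bang c => BCtx.lev c + 1
  | .op _ _ _ c => BCtx.lev c + 1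

/-- Contextual closure of a root rule on λ-terms. -/
def Lam.Step (root : Lam O ar → Lam O ar → Prop) (t s : Lam O ar) : Prop :=
  ∃ (c : LCtx O ar) (a b : Lam O ar), root a b ∧ t = c.plug a ∧ s = c.plug b

/-- Step at level `k` (w.r.t. a level function `lev` on λ-contexts). -/
def Lam.StepAt (lev : LCtx O ar → ℕ) (root : Lam O ar → Lam O ar → Prop)
    (k : ℕ) (t s : Lam O ar) : Prop :=
  ∃ (c : LCtx O ar) (a b : Lam O ar), root a b ∧ t = c.plug a ∧ s = c.plug b ∧ lev c = k

/-- Least level of a λ-term w.r.t. a redex set `Red` and level function `lev`. -/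
noncomputable def Lam.ll (lev : LCtx O ar → ℕ) (Red : Lam O ar → Prop) (t : Lam O ar) : ℕ∞ :=
  sInf { n : ℕ∞ | ∃ (c : LCtx O ar) (r : Lam O ar), Red r ∧ t = c.plug r ∧ (lev c : ℕ∞) = n }

/-- Least-level step. -/
def Lam.LLStep (lev : LCtx O ar → ℕ) (Red : Lam O ar → Prop)
    (root : Lam O ar → Lam O ar → Prop) (t s : Lam O ar) : Prop :=
  ∃ k : ℕ, Lam.StepAt lev root k t s ∧ (k : ℕ∞) = Lam.ll lev Red t

/-- Internal (non-least-level) step. -/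
def Lam.InStep (lev : LCtx O ar → ℕ) (Red : Lam O ar → Prop)
    (root : Lam O ar → Lam O ar → Prop) (t s : Lam O ar) : Prop :=
  ∃ k : ℕ, Lam.StepAt lev root k t s ∧ Lam.ll lev Red t < (k : ℕ∞)

/-- Contextual closure of a root rule on bang-terms. -/
def BT.Step (root : BT O ar → BT O ar → Prop) (t s : BT O ar) : Prop :=
  ∃ (c : BCtx O ar) (a b : BT O ar), root a b ∧ t = c.plug a ∧ s = c.plug b

/-- Step at level `k` in the bang calculus. -/
def BT.StepAt (root : BT O ar → BT O ar → Prop) (k : ℕ) (t s : BT O ar) : Prop :=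
  ∃ (c : BCtx O ar) (a b : BT O ar), root a b ∧ t = c.plug a ∧ s = c.plug b ∧ c.lev = k

/-- Least level of a bang-term w.r.t. a redex set `Red`. -/
noncomputable def BT.ll (Red : BT O ar → Prop) (t : BT O ar) : ℕ∞ :=
  sInf { n : ℕ∞ | ∃ (c : BCtx O ar) (r : BT O ar), Red r ∧ t = c.plug r ∧ (c.lev : ℕ∞) = n }

/-- Least-level step in the bang calculus. -/
def BT.LLStep (Red : BT O ar → Prop) (root : BT O ar → BT O ar → Prop)
    (t s : BT O ar) : Prop :=
  ∃ k : ℕ, BT.StepAt root k t s ∧ (k : ℕ∞) = BT.ll Red t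

/-- Internal (non-least-level) step in the bang calculus. -/
def BT.InStep (Red : BT O ar → Prop) (root : BT O ar → BT O ar → Prop)
    (t s : BT O ar) : Prop :=
  ∃ k : ℕ, BT.StepAt root k t s ∧ BT.ll Red t < (k : ℕ∞)

/-- β-rule: `(λx.t)s ↦β t[s/x]`. -/
def betaRoot : Lam O ar → Lam O ar → Prop := fun a b =>
  ∃ x t s, a = Lam.app (Lam.lam x t) s ∧ b = Lam.subst t x s

/-- β-redexes. -/
def betaRedex : Lam O ar → Prop := fun a => ∃ x t s, a = Lam.app (Lam.lam x t) s

/-- βv-rule: `(λx.t)V ↦βv t[V/x]` for `V` a value. -/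
def betavRoot : Lam O ar → Lam O ar → Prop := fun a b =>
  ∃ x t v, Lam.isValue v ∧ a = Lam.app (Lam.lam x t) v ∧ b = Lam.subst t x v

/-- βv-redexes. -/
def betavRedex : Lam O ar → Prop := fun a => ∃ x t v, Lam.isValue v ∧ a = Lam.app (Lam.lam x t) v

/-- !β-rule: `(λx.T)(!S) ↦!β T[S/x]`. -/
def bbetaRoot : BT O ar → BT O ar → Prop := fun a b =>
  ∃ x T S, a = BT.app (BT.lam x T) (BT.bang S) ∧ b = BT.subst T x S

/-- !β-redexes. -/
def bbetaRedex : BT O ar → Prop := fun a => ∃ x T S, a = BT.app (BT.lam x T) (BT.bang S)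

/-- `der := λx.x`. -/
def der : BT O ar := BT.lam 0 (BT.var 0)

/-- d-rule: `der(!T) ↦d T`. -/
def dRoot : BT O ar → BT O ar → Prop := fun a b => a = BT.app der (BT.bang b)

/-- CbN translation of λ-terms into the bang calculus. -/
def cbn : Lam O ar → BT O ar
  | .var x => .var x
  | .lam x t => .lam x (cbn t)
  | .app t s => .app (cbn t) (.bang (cbn s))
  | .op o ts => .op o (fun i => cbn (ts i))

/-- CbV translation of λ-terms into the bang calculus. -/
def cbv : Lam O ar → BT O ar
  | .var x => .bang (.var x)
  | .lam x t => .bang (.lam x (cbv t))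
  | .app t s =>
      match cbv t with
      | .bang T => .app T (cbv s)
      | T => .app (.app der T) (cbv s)
  | .op o ts => .op o (fun i => cbv (ts i))

/-- CbN translation of λ-contexts into bang-contexts. -/
def cbnCtx : LCtx O ar → BCtx O ar
  | .hole => .hole
  | .lam x c => .lam x (cbnCtx c)
  | .appL c t => .appL (cbnCtx c) (.bang (cbn t))
  | .appR t c => .appR (cbn t) (.bang (cbnCtx c))
  | .op o ts i c => .op o (fun j => cbn (ts j)) i (cbnCtx c)

/-- CbV translation of λ-contexts into bang-contexts. -/
def cbvCtx : LCtx O ar → BCtx O ar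
  | .hole => .hole
  | .lam x c => .bang (.lam x (cbvCtx c))
  | .appL c t =>
      match cbvCtx c with
      | .bang C => .appL C (cbv t)
      | C => .appL (.appR der C) (cbv t)
  | .appR t c =>
      match cbv t with
      | .bang T => .appR T (cbvCtx c)
      | T => .appR (.app der T) (cbvCtx c)
  | .op o ts i c => .op o (fun j => cbv (ts j)) i (cbvCtx c)

/-- `a` is `r`-normal: no `r`-step from `a`. -/
def Normal {α : Type*} (r : α → α → Prop) (a : α) : Prop := ∀ b, ¬ r a b

/-- `a` is strongly `r`-normalizing. -/
def SN {α : Type*} (r : α → α → Prop) (a : α) : Prop := Acc (fun x y => r y x) a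

/-- `e` is a normalizing strategy for `r`: it has the same normal forms as `r`, and
from every `r`-normalizable term every maximal `e`-sequence ends in a normal form
(i.e. it cannot be extended infinitely). -/
def NormalizingStrategy {α : Type*} (r e : α → α → Prop) : Prop :=
  (∀ a, Normal e a ↔ Normal r a) ∧
  ∀ t u, Relation.ReflTransGen r t u → Normal r u → SN e t

/-- Redex set of `→!β ∪ →O` for a family of operator rules. -/
def BT.RedSet (rules : O → BT O ar → BT O ar → Prop) : BT O ar → Prop :=
  fun A => bbetaRedex A ∨ ∃ o B, rules o A B

/-- Step at level `k` of the compound reduction `→!β ∪ →O`. -/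
def BT.FullAt (rules : O → BT O ar → BT O ar → Prop) (k : ℕ) (T S : BT O ar) : Prop :=
  BT.StepAt bbetaRoot k T S ∨ ∃ o, BT.StepAt (rules o) k T S

/-- The compound reduction `→!β ∪ →O` of the bang calculus. -/
def BT.Full (rules : O → BT O ar → BT O ar → Prop) (T S : BT O ar) : Prop :=
  ∃ k, BT.FullAt rules k T S

/-- Least-level step of `→!β ∪ →O`. -/
def BT.FullLL (rules : O → BT O ar → BT O ar → Prop) (T S : BT O ar) : Prop :=
  ∃ k : ℕ, BT.FullAt rules k T S ∧ (k : ℕ∞) = BT.ll (BT.RedSet rules) T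

/-- Internal step of `→!β ∪ →O`. -/
def BT.FullIn (rules : O → BT O ar → BT O ar → Prop) (T S : BT O ar) : Prop :=
  ∃ k : ℕ, BT.FullAt rules k T S ∧ BT.ll (BT.RedSet rules) T < (k : ℕ∞)

/-- Redex set of `→base ∪ →O` on λ-terms. -/
def Lam.RedSet (base : Lam O ar → Prop) (rules : O → Lam O ar → Lam O ar → Prop) :
    Lam O ar → Prop :=
  fun a => base a ∨ ∃ o b, rules o a b

/-- Step at level `k` of the compound reduction `→root ∪ →O` on λ-terms. -/
def Lam.FullAt (lev : LCtx O ar → ℕ) (root : Lam O ar → Lam O ar → Prop)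
    (rules : O → Lam O ar → Lam O ar → Prop) (k : ℕ) (t s : Lam O ar) : Prop :=
  Lam.StepAt lev root k t s ∨ ∃ o, Lam.StepAt lev (rules o) k t s

/-- Compound reduction `→root ∪ →O` on λ-terms. -/
def Lam.Full (lev : LCtx O ar → ℕ) (root : Lam O ar → Lam O ar → Prop)
    (rules : O → Lam O ar → Lam O ar → Prop) (t s : Lam O ar) : Prop :=
  ∃ k, Lam.FullAt lev root rules k t s

/-- Least-level step of the compound reduction on λ-terms. -/
def Lam.FullLL (lev : LCtx O ar → ℕ) (base : Lam O ar → Prop)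
    (root : Lam O ar → Lam O ar → Prop)
    (rules : O → Lam O ar → Lam O ar → Prop) (t s : Lam O ar) : Prop :=
  ∃ k : ℕ, Lam.FullAt lev root rules k t s ∧ (k : ℕ∞) = Lam.ll lev (Lam.RedSet base rules) t

/-- Internal step of the compound reduction on λ-terms. -/
def Lam.FullIn (lev : LCtx O ar → ℕ) (base : Lam O ar → Prop)
    (root : Lam O ar → Lam O ar → Prop)
    (rules : O → Lam O ar → Lam O ar → Prop) (t s : Lam O ar) : Prop :=
  ∃ k : ℕ, Lam.FullAt lev root rules k t s ∧ Lam.ll lev (Lam.RedSet base rules) t < (k : ℕ∞)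

/-! The CbN translation commutes with substitution and with plugging into contexts, which gives
soundness. For completeness, the only subterms of `t^n` that are not translations of subterms of
`t` are the boxes `!(s^n)` of arguments. Redexes are never boxes, so a redex occurrence in `t^n`
sits in a translated context `c^n` at a translated subterm `u^n`, and then comes from a redex `u`
of `t`. -/

lemma cbn_subst (t : Lam O ar) (x : ℕ) (u : Lam O ar) :
    cbn (t.subst x u) = (cbn t).subst x (cbn u) := by
  induction t with
  | var y => simp only [Lam.subst, cbn, BT.subst]; split <;> rfl
  | lam y t ih => simp only [Lam.subst, cbn, BT.subst]; split <;> simp [cbn, ih]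
  | app t s iht ihs => simp [Lam.subst, cbn, BT.subst, iht, ihs]
  | op o ts ih => simp [Lam.subst, cbn, BT.subst, ih]

lemma cbn_plug (c : LCtx O ar) (t : Lam O ar) :
    cbn (c.plug t) = (cbnCtx c).plug (cbn t) := by
  induction c with
  | hole => rfl
  | lam x c ih => simp [LCtx.plug, cbnCtx, BCtx.plug, cbn, ih]
  | appL c s ih => simp [LCtx.plug, cbnCtx, BCtx.plug, cbn, ih]
  | appR s c ih => simp [LCtx.plug, cbnCtx, BCtx.plug, cbn, ih]
  | op o ts i c ih =>
    simp only [LCtx.plug, cbnCtx, BCtx.plug, cbn, ← ih]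
    congr 1
    funext j
    exact Function.apply_update (fun _ => cbn) ts i (c.plug t) j

/-- Only the plugging functions of `C` and `cbnCtx c` agree: an operator context `.op o Ts i C`
carries an arbitrary, ignored term `Ts i` at the position of its hole. -/
theorem exists_cbnCtx_of_cbn_eq_plug {A : BT O ar} (hA : ∀ S, A ≠ .bang S) :
    ∀ (C : BCtx O ar) (t : Lam O ar), cbn t = C.plug A →
      ∃ c u, t = c.plug u ∧ A = cbn u ∧ C.plug = (cbnCtx c).plug
  | .hole, t, h => ⟨.hole, t, rfl, h.symm, rfl⟩
  | .lam x C, t, h => by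
    cases t <;> simp only [cbn, BCtx.plug, BT.lam.injEq, reduceCtorEq] at h
    obtain ⟨rfl, h⟩ := h
    obtain ⟨c, u, rfl, rfl, hC⟩ := exists_cbnCtx_of_cbn_eq_plug hA C _ h
    exact ⟨.lam _ c, u, rfl, rfl, by funext B; simp [BCtx.plug, cbnCtx, hC]⟩
  | .appL C S, t, h => by
    cases t <;> simp only [cbn, BCtx.plug, BT.app.injEq, reduceCtorEq] at h
    obtain ⟨h, rfl⟩ := h
    obtain ⟨c, u, rfl, rfl, hC⟩ := exists_cbnCtx_of_cbn_eq_plug hA C _ h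
    exact ⟨.appL c _, u, rfl, rfl, by funext B; simp [BCtx.plug, cbnCtx, hC]⟩
  | .appR S (.bang C), t, h => by
    cases t <;> simp only [cbn, BCtx.plug, BT.app.injEq, BT.bang.injEq, reduceCtorEq] at h
    obtain ⟨rfl, h⟩ := h
    obtain ⟨c, u, rfl, rfl, hC⟩ := exists_cbnCtx_of_cbn_eq_plug hA C _ h
    exact ⟨.appR _ c, u, rfl, rfl, by funext B; simp [BCtx.plug, cbnCtx, hC]⟩
  | .appR S .hole, t, h => by
    cases t <;> simp only [cbn, BCtx.plug, BT.app.injEq, reduceCtorEq] at h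
    exact absurd h.2.symm (hA _)
  | .appR _ (.lam ..), t, h | .appR _ (.appL ..), t, h | .appR _ (.appR ..), t, h
  | .appR _ (.op ..), t, h | .bang _, t, h => by
    cases t <;> simp [cbn, BCtx.plug] at h
  | .op o Ts i C, t, h => by
    cases t with
    | op o' us =>
      simp only [cbn, BCtx.plug] at h
      obtain ⟨rfl, h⟩ := BT.op.inj h
      replace h := eq_of_heq h
      obtain ⟨c, u, hu, rfl, hC⟩ :=
        exists_cbnCtx_of_cbn_eq_plug hA C (us i) (by simpa using congrFun h i)
      refine ⟨.op o' us i c, u, by simp [LCtx.plug, ← hu], rfl, ?_⟩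
      funext B
      simp only [BCtx.plug, cbnCtx, hC, h, Function.update_idem]
    | _ => simp [cbn, BCtx.plug] at h

lemma Lam.Step.map_cbn {rl : Lam O ar → Lam O ar → Prop} {rb : BT O ar → BT O ar → Prop}
    (hroot : ∀ a b, rl a b → rb (cbn a) (cbn b)) {t t' : Lam O ar} (h : Lam.Step rl t t') :
    BT.Step rb (cbn t) (cbn t') := by
  obtain ⟨c, a, b, hab, rfl, rfl⟩ := h
  exact ⟨cbnCtx c, cbn a, cbn b, hroot a b hab, cbn_plug c a, cbn_plug c b⟩

lemma BT.Step.exists_of_cbn {rl : Lam O ar → Lam O ar → Prop} {rb : BT O ar → BT O ar → Prop}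
    (hbang : ∀ A B, rb A B → ∀ S, A ≠ .bang S)
    (hroot : ∀ a B, rb (cbn a) B → ∃ b, B = cbn b ∧ rl a b)
    {t : Lam O ar} {S : BT O ar} (h : BT.Step rb (cbn t) S) :
    ∃ t', S = cbn t' ∧ Lam.Step rl t t' := by
  obtain ⟨C, A, B, hAB, ht, rfl⟩ := h
  obtain ⟨c, u, rfl, rfl, hC⟩ := exists_cbnCtx_of_cbn_eq_plug (hbang A B hAB) C t ht
  obtain ⟨u', rfl, hu⟩ := hroot u B hAB
  exact ⟨c.plug u', by rw [hC, cbn_plug], c, u, u', hu, rfl, rfl⟩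

lemma bbetaRoot_cbn_of_betaRoot {a b : Lam O ar} (h : betaRoot a b) :
    bbetaRoot (cbn a) (cbn b) := by
  obtain ⟨x, t, s, rfl, rfl⟩ := h
  exact ⟨x, cbn t, cbn s, rfl, cbn_subst t x s⟩

lemma exists_betaRoot_of_bbetaRoot_cbn {a : Lam O ar} {B : BT O ar}
    (h : bbetaRoot (cbn a) B) : ∃ b, B = cbn b ∧ betaRoot a b := by
  obtain ⟨x, T, S, ha, rfl⟩ := h
  match a, ha with
  | .app (.lam x t) s, ha =>
    simp only [cbn, BT.app.injEq, BT.lam.injEq, BT.bang.injEq] at ha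
    obtain ⟨⟨rfl, rfl⟩, rfl⟩ := ha
    exact ⟨t.subst x s, (cbn_subst t x s).symm, x, t, s, rfl, rfl⟩

theorem cbn_simulation_general {O : Type} {ar : O → ℕ} (o : O)
    (lamRule : Lam O ar → Lam O ar → Prop) (bangRule : BT O ar → BT O ar → Prop)
    (hshapeB : ∀ a b, bangRule a b → ∃ Ts, a = BT.op o Ts)
    (hsound : ∀ a b, lamRule a b → bangRule (cbn a) (cbn b))
    (hcomplete : ∀ a S, bangRule (cbn a) S → ∃ b, S = cbn b ∧ lamRule a b) :
    (∀ t t' : Lam O ar, Lam.Step betaRoot t t' → BT.Step bbetaRoot (cbn t) (cbn t')) ∧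
    (∀ t t' : Lam O ar, Lam.Step lamRule t t' → BT.Step bangRule (cbn t) (cbn t')) ∧
    (∀ (t : Lam O ar) (S : BT O ar), BT.Step bbetaRoot (cbn t) S →
      ∃ t', S = cbn t' ∧ Lam.Step betaRoot t t') ∧
    (∀ (t : Lam O ar) (S : BT O ar), BT.Step bangRule (cbn t) S →
      ∃ t', S = cbn t' ∧ Lam.Step lamRule t t') := by
  have hbbeta_not_bang : ∀ A B, bbetaRoot A B → ∀ S, A ≠ BT.bang (O := O) (ar := ar) S := by
    rintro _ _ ⟨_, _, _, rfl, -⟩ _ ⟨⟩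
  have hrule_not_bang : ∀ A B, bangRule A B → ∀ S, A ≠ BT.bang S := by
    intro A B hAB S
    obtain ⟨Ts, rfl⟩ := hshapeB A B hAB
    exact nofun
  exact ⟨fun _ _ => Lam.Step.map_cbn fun _ _ => bbetaRoot_cbn_of_betaRoot,
    fun _ _ => Lam.Step.map_cbn hsound,
    fun _ _ => BT.Step.exists_of_cbn hbbeta_not_bang fun _ _ => exists_betaRoot_of_bbetaRoot_cbn,
    fun _ _ => BT.Step.exists_of_cbn hrule_not_bang hcomplete⟩

/-- Simulation of CbN in the bang calculus: soundness and completeness for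
`→β` vs `→!β` and for each operator rule `→o`, via the CbN translation.
The operator rule is given both on λ-terms (`lamRule`) and on bang-terms
(`bangRule`, the corresponding rule), with left-hand sides of shape `o(...)`,
and the two rules correspond to each other under the CbN translation. -/
theorem cbn_simulation {O : Type} {ar : O → ℕ} (o : O)
    (lamRule : Lam O ar → Lam O ar → Prop) (bangRule : BT O ar → BT O ar → Prop)
    (hshapeL : ∀ a b, lamRule a b → ∃ ts, a = Lam.op o ts)
    (hshapeB : ∀ a b, bangRule a b → ∃ Ts, a = BT.op o Ts)
    (hsound : ∀ a b, lamRule a b → bangRule (cbn a) (cbn b))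
    (hcomplete : ∀ a S, bangRule (cbn a) S → ∃ b, S = cbn b ∧ lamRule a b) :
    (∀ t t' : Lam O ar, Lam.Step betaRoot t t' → BT.Step bbetaRoot (cbn t) (cbn t')) ∧
    (∀ t t' : Lam O ar, Lam.Step lamRule t t' → BT.Step bangRule (cbn t) (cbn t')) ∧
    (∀ (t : Lam O ar) (S : BT O ar), BT.Step bbetaRoot (cbn t) S →
      ∃ t', S = cbn t' ∧ Lam.Step betaRoot t t') ∧
    (∀ (t : Lam O ar) (S : BT O ar), BT.Step bangRule (cbn t) S →
      ∃ t', S = cbn t' ∧ Lam.Step lamRule t t') :=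
  cbn_simulation_general o lamRule bangRule hshapeB hsound hcomplete

end BangPaper
end

section
/- Simulation of CbV in the bang calculus: for every λ-term t and operator o ∈ O: (soundness) if t →βv t' then t^v →!β · →d^= t'^v with t'^v d-normal, and if t →o t' then t^v →o · →d^= t'^v with t'^v d-normal; (completeness) if t^v →!β · ↠d S then t^v →!β · →d^= S with S = t'^v and t →βv t' for some λ-term t', and if t^v →o · ↠d S then t^v →o · →d^= S with S = t'^v and t →o t' for some λ-term t'. -/
namespace BangPaper

variable {O : Type} {ar : O → ℕ}

/-!
A λ-context `c` translates to a bang context `c^v` with `c^v⟨b^v⟩ = (c⟨b⟩)^v`, except when a value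
`b` with `b^v = !W` lands in function position: there the context supplies a `der` that the
translation of the plugged term omits, and `c^v⟨b^v⟩ →d (c⟨b⟩)^v` by contracting `der (!W)`.
Hence a root step `a ↦ b` at `c` becomes the root step `a^v ↦ b^v` at `c^v` followed by at most one
d-step. Conversely, a !β- or o-redex of `t^v` only occurs as `c^v⟨a^v⟩` for a λ-redex `a` at a
context `c` of `t`. The d-normal form reached afterwards is forced: translations are d-normal, and a
d-step with a d-normal target is the only d-step from its source.
-/

theorem Normal.eq_of_reflTransGen {α : Type*} {r : α → α → Prop} {u v : α} (hu : Normal r u)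
    (h : Relation.ReflTransGen r u v) : v = u := by
  rcases h.cases_head with rfl | ⟨w, huw, -⟩
  · rfl
  · exact absurd huw (hu w)

theorem Normal.eq_of_reflTransGen_of_unique_step {α : Type*} {r : α → α → Prop} {u v s : α}
    (hv : Normal r v) (huv : r u v) (huniq : ∀ w, r u w → w = v)
    (hus : Relation.ReflTransGen r u s) (hs : Normal r s) : s = v := by
  rcases hus.cases_head with rfl | ⟨w, huw, hws⟩
  · exact absurd huv (hs v)
  · exact hv.eq_of_reflTransGen (huniq w huw ▸ hws)

theorem update_eq_update_of_update_eq {ι α : Type*} [DecidableEq ι] {f g : ι → α} {i : ι}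
    {x y : α} (h : Function.update f i x = Function.update g i y) (z : α) :
    Function.update f i z = Function.update g i z := by
  rw [← Function.update_idem x z f, h, Function.update_idem]

namespace BCtx

def comp : BCtx O ar → BCtx O ar → BCtx O ar
  | .hole, D => D
  | .lam x C, D => .lam x (C.comp D)
  | .appL C S, D => .appL (C.comp D) S
  | .appR T C, D => .appR T (C.comp D)
  | .bang C, D => .bang (C.comp D)
  | .op o Ts i C, D => .op o Ts i (C.comp D)

@[simp]
theorem plug_comp (C D : BCtx O ar) (X : BT O ar) : (C.comp D).plug X = C.plug (D.plug X) := by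
  induction C <;> simp [comp, plug, *]

theorem plug_eq_var {C : BCtx O ar} {A : BT O ar} {y : ℕ} (h : C.plug A = .var y) :
    C = .hole ∧ A = .var y := by
  cases C <;> simp_all [plug]

theorem plug_eq_lam {C : BCtx O ar} {A T : BT O ar} {x : ℕ} (h : C.plug A = .lam x T) :
    C = .hole ∧ A = .lam x T ∨ ∃ C', C = .lam x C' ∧ C'.plug A = T := by
  cases C <;> simp_all [plug]

theorem plug_eq_bang {C : BCtx O ar} {A T : BT O ar} (h : C.plug A = .bang T) :
    C = .hole ∧ A = .bang T ∨ ∃ C', C = .bang C' ∧ C'.plug A = T := by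
  cases C <;> simp_all [plug]

theorem plug_eq_app {C : BCtx O ar} {A T S : BT O ar} (h : C.plug A = .app T S) :
    C = .hole ∧ A = .app T S ∨ (∃ C', C = .appL C' S ∧ C'.plug A = T) ∨
      ∃ C', C = .appR T C' ∧ C'.plug A = S := by
  cases C <;> simp_all [plug]

theorem plug_eq_op {C : BCtx O ar} {A : BT O ar} {o : O} {Ts : Fin (ar o) → BT O ar}
    (h : C.plug A = .op o Ts) :
    C = .hole ∧ A = .op o Ts ∨
      ∃ Ts' i C', C = .op o Ts' i C' ∧ Ts = Function.update Ts' i (C'.plug A) := by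
  cases C with
  | op o' Ts' i C' =>
    simp only [plug, BT.op.injEq] at h
    obtain ⟨rfl, h⟩ := h
    exact .inr ⟨Ts', i, C', rfl, (eq_of_heq h).symm⟩
  | _ => simp_all [plug]

end BCtx

theorem BT.Step.plug {r : BT O ar → BT O ar → Prop} {U V : BT O ar} (h : BT.Step r U V)
    (E : BCtx O ar) : BT.Step r (E.plug U) (E.plug V) := by
  obtain ⟨D, a, b, hab, rfl, rfl⟩ := h
  exact ⟨E.comp D, a, b, hab, (E.plug_comp D a).symm, (E.plug_comp D b).symm⟩

abbrev DNormal (T : BT O ar) : Prop := Normal (BT.Step dRoot) T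

theorem DNormal.of_plug {E : BCtx O ar} {U : BT O ar} (h : DNormal (E.plug U)) : DNormal U :=
  fun _ hUV => h _ (hUV.plug E)

theorem DNormal.of_op {o : O} {Ts : Fin (ar o) → BT O ar} (h : DNormal (.op o Ts))
    (i : Fin (ar o)) : DNormal (Ts i) :=
  DNormal.of_plug (E := .op o Ts i .hole) (by simpa [BCtx.plug] using h)

theorem not_dNormal_plug_dRedex (D : BCtx O ar) (b : BT O ar) :
    ¬ DNormal (D.plug (.app der (.bang b))) :=
  fun h => h _ ⟨D, _, b, rfl, rfl, rfl⟩

theorem dNormal_var (y : ℕ) : DNormal (.var y : BT O ar) := by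
  rintro _ ⟨C, a, b, rfl, hC, -⟩
  simpa using (BCtx.plug_eq_var hC.symm).2

theorem DNormal.lam {T : BT O ar} (h : DNormal T) (x : ℕ) : DNormal (.lam x T) := by
  rintro _ ⟨C, a, b, rfl, hC, rfl⟩
  rcases BCtx.plug_eq_lam hC.symm with ⟨-, h'⟩ | ⟨C', rfl, rfl⟩
  · cases h'
  · exact h _ ⟨C', _, b, rfl, rfl, rfl⟩

theorem DNormal.bang {T : BT O ar} (h : DNormal T) : DNormal (.bang T) := by
  rintro _ ⟨C, a, b, rfl, hC, rfl⟩
  rcases BCtx.plug_eq_bang hC.symm with ⟨-, h'⟩ | ⟨C', rfl, rfl⟩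
  · cases h'
  · exact h _ ⟨C', _, b, rfl, rfl, rfl⟩

theorem DNormal.app {T S : BT O ar} (hT : DNormal T) (hS : DNormal S)
    (hroot : ∀ B, ¬ dRoot (.app T S) B) : DNormal (.app T S) := by
  rintro _ ⟨C, a, b, rfl, hC, rfl⟩
  rcases BCtx.plug_eq_app hC.symm with ⟨rfl, h'⟩ | ⟨C', rfl, rfl⟩ | ⟨C', rfl, rfl⟩
  · exact hroot b h'.symm
  · exact hT _ ⟨C', _, b, rfl, rfl, rfl⟩
  · exact hS _ ⟨C', _, b, rfl, rfl, rfl⟩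

theorem dNormal_op {o : O} {Ts : Fin (ar o) → BT O ar} (h : ∀ i, DNormal (Ts i)) :
    DNormal (.op o Ts) := by
  rintro _ ⟨C, a, b, rfl, hC, rfl⟩
  rcases BCtx.plug_eq_op hC.symm with ⟨-, h'⟩ | ⟨Ts', i, C', rfl, hTs⟩
  · cases h'
  · exact h i _ ⟨C', _, b, rfl, by simp [hTs], rfl⟩

theorem cbv_app_of_eq_bang {t₁ : Lam O ar} {T : BT O ar} (h : cbv t₁ = .bang T) (t₂ : Lam O ar) :
    cbv (.app t₁ t₂) = .app T (cbv t₂) := by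
  simp [cbv, h]

theorem exists_cbv_eq_bang_iff {t : Lam O ar} : (∃ W, cbv t = .bang W) ↔ t.isValue := by
  cases t with
  | app t₁ t₂ => cases h : cbv t₁ <;> simp [cbv, h, Lam.isValue]
  | _ => simp [cbv, Lam.isValue]

theorem cbv_app_of_not_isValue {t₁ : Lam O ar} (h : ¬ t₁.isValue) (t₂ : Lam O ar) :
    cbv (.app t₁ t₂) = .app (.app der (cbv t₁)) (cbv t₂) := by
  rw [← exists_cbv_eq_bang_iff] at h
  cases h' : cbv t₁ <;> simp_all [cbv]

theorem cbv_ne_var (t : Lam O ar) (y : ℕ) : cbv t ≠ .var y := by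
  cases t with
  | app t₁ t₂ => cases h : cbv t₁ <;> simp [cbv, h]
  | _ => simp [cbv]

theorem cbv_ne_bang_der (t : Lam O ar) : cbv t ≠ .bang der := by
  cases t with
  | lam x u => simpa [cbv, der] using fun _ => cbv_ne_var u 0
  | app t₁ t₂ => cases h : cbv t₁ <;> simp [cbv, h]
  | _ => simp [cbv, der]

theorem dNormal_der : DNormal (der : BT O ar) :=
  (dNormal_var 0).lam 0

theorem dNormal_cbv (t : Lam O ar) : DNormal (cbv t) := by
  induction t with
  | var x => exact (dNormal_var x).bang
  | lam x u ih => exact (ih.lam x).bang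
  | op o ts ih => exact dNormal_op ih
  | app t₁ t₂ ih₁ ih₂ =>
    by_cases hv : t₁.isValue
    · obtain ⟨T, hT⟩ := exists_cbv_eq_bang_iff.2 hv
      rw [cbv_app_of_eq_bang hT]
      have hT' : DNormal (.bang T) := hT ▸ ih₁
      refine DNormal.app (DNormal.of_plug (E := .bang .hole) hT') ih₂ ?_
      rintro B hB
      simp only [dRoot, BT.app.injEq] at hB
      exact cbv_ne_bang_der t₁ (hB.1 ▸ hT)
    · rw [cbv_app_of_not_isValue hv]
      refine DNormal.app (DNormal.app dNormal_der ih₁ ?_) ih₂ (by simp [dRoot, der])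
      rintro B hB
      simp only [dRoot, BT.app.injEq] at hB
      exact hv (exists_cbv_eq_bang_iff.1 ⟨B, hB.2⟩)

theorem cbv_subst (u : Lam O ar) (x : ℕ) {V : Lam O ar} {W : BT O ar} (hV : cbv V = .bang W) :
    cbv (u.subst x V) = (cbv u).subst x W := by
  have der_subst : (der : BT O ar).subst x W = der := by
    by_cases h : 0 = x <;> simp [der, BT.subst, h]
  induction u with
  | var y => by_cases h : y = x <;> simp [Lam.subst, cbv, BT.subst, h, hV]
  | lam y t ih => by_cases h : y = x <;> simp [Lam.subst, cbv, BT.subst, h, ih]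
  | op o ts ih => simp [Lam.subst, cbv, BT.subst, ih]
  | app t₁ t₂ ih₁ ih₂ =>
    by_cases hv : t₁.isValue
    · obtain ⟨T, hT⟩ := exists_cbv_eq_bang_iff.2 hv
      have hT' : cbv (t₁.subst x V) = .bang (T.subst x W) := by rw [ih₁, hT, BT.subst]
      rw [Lam.subst, cbv_app_of_eq_bang hT, cbv_app_of_eq_bang hT', ih₂, BT.subst]
    · have hv' : ¬ (t₁.subst x V).isValue := by
        cases t₁ <;> simp_all [Lam.isValue, Lam.subst]
      rw [Lam.subst, cbv_app_of_not_isValue hv, cbv_app_of_not_isValue hv', ih₁, ih₂]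
      simp [BT.subst, der_subst]

theorem plug_dRedex_ne_der (D : BCtx O ar) (b : BT O ar) : D.plug (.app der (.bang b)) ≠ der := by
  intro h
  rcases BCtx.plug_eq_lam h with ⟨-, h'⟩ | ⟨D', -, hD'⟩
  · cases h'
  · cases (BCtx.plug_eq_var hD').2

theorem plug_eq_of_dRedex_eq_plug_dRedex {D : BCtx O ar} {a b : BT O ar} (ha : DNormal a)
    (h : .app der (.bang a) = D.plug (.app der (.bang b))) : D.plug b = a := by
  rcases BCtx.plug_eq_app h.symm with ⟨rfl, h'⟩ | ⟨D', rfl, hD'⟩ | ⟨D', rfl, hD'⟩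
  · simp_all [BCtx.plug]
  · exact absurd hD' (plug_dRedex_ne_der D' b)
  · rcases BCtx.plug_eq_bang hD' with ⟨-, h'⟩ | ⟨D'', -, rfl⟩
    · cases h'
    · exact absurd ha (not_dNormal_plug_dRedex D'' b)

/-- Any other d-redex of `D₁⟨der (!a)⟩` would survive in the d-normal `D₁⟨a⟩`. -/
theorem plug_eq_of_plug_dRedex_eq {D₁ D₂ : BCtx O ar} {a b : BT O ar} (ha : DNormal (D₁.plug a))
    (h : D₁.plug (.app der (.bang a)) = D₂.plug (.app der (.bang b))) :
    D₂.plug b = D₁.plug a := by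
  induction D₁ generalizing D₂ with
  | hole => exact plug_eq_of_dRedex_eq_plug_dRedex ha h
  | lam x D₁ ih =>
    rcases BCtx.plug_eq_lam h.symm with ⟨-, h'⟩ | ⟨D', rfl, hD'⟩
    · cases h'
    · exact congrArg (BT.lam x) (ih (ha.of_plug (E := .lam x .hole)) hD'.symm)
  | bang D₁ ih =>
    rcases BCtx.plug_eq_bang h.symm with ⟨-, h'⟩ | ⟨D', rfl, hD'⟩
    · cases h'
    · exact congrArg BT.bang (ih (ha.of_plug (E := .bang .hole)) hD'.symm)
  | appL D₁ S ih =>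
    rcases BCtx.plug_eq_app h.symm with ⟨-, h'⟩ | ⟨D', rfl, hD'⟩ | ⟨D', rfl, hD'⟩
    · simp only [BT.app.injEq] at h'
      exact absurd h'.1.symm (plug_dRedex_ne_der D₁ a)
    · exact congrArg (BT.app · S) (ih (ha.of_plug (E := .appL .hole S)) hD'.symm)
    · exact absurd (hD' ▸ ha.of_plug (E := .appR _ .hole)) (not_dNormal_plug_dRedex D' b)
  | appR T D₁ ih =>
    rcases BCtx.plug_eq_app h.symm with ⟨-, h'⟩ | ⟨D', rfl, hD'⟩ | ⟨D', rfl, hD'⟩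
    · simp only [BT.app.injEq] at h'
      obtain ⟨rfl, hD₁⟩ := h'
      rcases BCtx.plug_eq_bang hD₁.symm with ⟨-, h'⟩ | ⟨D'', rfl, -⟩
      · cases h'
      · exact absurd ha (not_dNormal_plug_dRedex .hole _)
    · exact absurd (hD' ▸ ha.of_plug (E := .appL .hole _)) (not_dNormal_plug_dRedex D' b)
    · exact congrArg (BT.app T) (ih (ha.of_plug (E := .appR T .hole)) hD'.symm)
  | op o Ts i D₁ ih =>
    rcases BCtx.plug_eq_op h.symm with ⟨-, h'⟩ | ⟨Ts', j, D', rfl, hTs⟩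
    · cases h'
    by_cases hij : i = j
    · subst hij
      have hD' : D₁.plug (.app der (.bang a)) = D'.plug (.app der (.bang b)) := by
        simpa using congrFun hTs i
      have hi : DNormal (D₁.plug a) := by simpa using ha.of_op i
      simp only [BCtx.plug, ih hi hD', update_eq_update_of_update_eq hTs.symm]
    · have hj : Ts j = D'.plug (.app der (.bang b)) := by
        simpa [Function.update_of_ne (Ne.symm hij)] using congrFun hTs j
      have := ha.of_op j
      simp only [Function.update_of_ne (Ne.symm hij), hj] at this
      exact absurd this (not_dNormal_plug_dRedex D' b)

theorem dStep_eq_of_dNormal {U V W : BT O ar} (hUV : BT.Step dRoot U V) (hV : DNormal V)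
    (hUW : BT.Step dRoot U W) : W = V := by
  obtain ⟨D₁, _, a, rfl, rfl, rfl⟩ := hUV
  obtain ⟨D₂, _, b, rfl, h, rfl⟩ := hUW
  exact plug_eq_of_plug_dRedex_eq hV h

def EqOrDStep (p : Prop) (U V : BT O ar) : Prop :=
  U = V ∨ p ∧ BT.Step dRoot U V

theorem EqOrDStep.plug {p : Prop} {U V : BT O ar} (h : EqOrDStep p U V) (E : BCtx O ar) :
    EqOrDStep p (E.plug U) (E.plug V) :=
  h.imp (congrArg E.plug) (And.imp_right (·.plug E))

theorem EqOrDStep.reflGen {p : Prop} {U V : BT O ar} (h : EqOrDStep p U V) :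
    Relation.ReflGen (BT.Step dRoot) U V := by
  rcases h with rfl | ⟨-, h⟩
  exacts [.refl, .single h]

theorem cbvCtx_appL_of_ne_lam {c : LCtx O ar} (hc : ∀ x c', c ≠ .lam x c') (s : Lam O ar) :
    cbvCtx (.appL c s) = .appL (.appR der (cbvCtx c)) (cbv s) := by
  cases c with
  | lam x c' => exact absurd rfl (hc x c')
  | appL c' s' => cases h : cbvCtx c' <;> simp [cbvCtx, h]
  | appR t c' => cases h : cbv t <;> simp [cbvCtx, h]
  | _ => simp [cbvCtx]

theorem cbvCtx_appR_of_eq_bang {t : Lam O ar} {T : BT O ar} (h : cbv t = .bang T)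
    (c : LCtx O ar) : cbvCtx (.appR t c) = .appR T (cbvCtx c) := by
  simp [cbvCtx, h]

theorem cbvCtx_appR_of_not_isValue {t : Lam O ar} (h : ¬ t.isValue) (c : LCtx O ar) :
    cbvCtx (.appR t c) = .appR (.app der (cbv t)) (cbvCtx c) := by
  rw [← exists_cbv_eq_bang_iff] at h
  cases h' : cbv t <;> simp_all [cbvCtx]

theorem cbv_op_update {o : O} (ts : Fin (ar o) → Lam O ar) (i : Fin (ar o)) (u : Lam O ar) :
    cbv (.op o (Function.update ts i u)) = .op o (Function.update (cbv ∘ ts) i (cbv u)) := by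
  rw [cbv, ← Function.comp_update]
  rfl

theorem eqOrDStep_cbvCtx_plug_appL {c : LCtx O ar} {b : Lam O ar} (hc : ∀ x c', c ≠ .lam x c')
    (hv : ¬ (c.plug b).isValue)
    (h : EqOrDStep b.isValue ((cbvCtx c).plug (cbv b)) (cbv (c.plug b))) (s : Lam O ar) :
    EqOrDStep b.isValue ((cbvCtx (.appL c s)).plug (cbv b)) (cbv ((LCtx.appL c s).plug b)) := by
  rw [cbvCtx_appL_of_ne_lam hc, LCtx.plug, cbv_app_of_not_isValue hv]
  exact h.plug (.appL (.appR der .hole) (cbv s))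

theorem eqOrDStep_cbvCtx_plug :
    ∀ (c : LCtx O ar) (b : Lam O ar),
      EqOrDStep b.isValue ((cbvCtx c).plug (cbv b)) (cbv (c.plug b))
  | .hole, _ => .inl rfl
  | .lam x c, b => (eqOrDStep_cbvCtx_plug c b).plug (.bang (.lam x .hole))
  | .appL .hole s, b => by
    rw [cbvCtx_appL_of_ne_lam (by simp) s]
    by_cases hb : b.isValue
    · obtain ⟨W, hW⟩ := exists_cbv_eq_bang_iff.2 hb
      refine .inr ⟨hb, ?_⟩
      simp only [LCtx.plug, cbv_app_of_eq_bang hW, cbvCtx, BCtx.plug, hW]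
      exact ⟨.appL .hole (cbv s), _, W, rfl, rfl, rfl⟩
    · simp only [LCtx.plug, cbv_app_of_not_isValue hb, cbvCtx, BCtx.plug]
      exact .inl rfl
  | .appL (.lam x c) s, b => (eqOrDStep_cbvCtx_plug c b).plug (.appL (.lam x .hole) (cbv s))
  | .appL (.appL c s') s, b =>
    eqOrDStep_cbvCtx_plug_appL (by simp) (by simp [LCtx.plug, Lam.isValue])
      (eqOrDStep_cbvCtx_plug _ b) s
  | .appL (.appR t c) s, b =>
    eqOrDStep_cbvCtx_plug_appL (by simp) (by simp [LCtx.plug, Lam.isValue])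
      (eqOrDStep_cbvCtx_plug _ b) s
  | .appL (.op o ts i c) s, b =>
    eqOrDStep_cbvCtx_plug_appL (by simp) (by simp [LCtx.plug, Lam.isValue])
      (eqOrDStep_cbvCtx_plug _ b) s
  | .appR t c, b => by
    by_cases ht : t.isValue
    · obtain ⟨T, hT⟩ := exists_cbv_eq_bang_iff.2 ht
      rw [cbvCtx_appR_of_eq_bang hT, LCtx.plug, cbv_app_of_eq_bang hT]
      exact (eqOrDStep_cbvCtx_plug c b).plug (.appR T .hole)
    · rw [cbvCtx_appR_of_not_isValue ht, LCtx.plug, cbv_app_of_not_isValue ht]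
      exact (eqOrDStep_cbvCtx_plug c b).plug (.appR (.app der (cbv t)) .hole)
  | .op o ts i c, b => by
    rw [LCtx.plug, cbv_op_update]
    exact (eqOrDStep_cbvCtx_plug c b).plug (.op o (cbv ∘ ts) i .hole)

def IsBBetaRedexOrOp (A : BT O ar) : Prop :=
  bbetaRedex A ∨ ∃ o Ts, A = .op o Ts

namespace IsBBetaRedexOrOp

variable {A : BT O ar}

theorem plug_ne_var (hA : IsBBetaRedexOrOp A) (C : BCtx O ar) (y : ℕ) : C.plug A ≠ .var y := by
  intro h
  rcases hA with ⟨x, T, S, rfl⟩ | ⟨o, Ts, rfl⟩ <;> cases (BCtx.plug_eq_var h).2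

theorem plug_eq_lam (hA : IsBBetaRedexOrOp A) {C : BCtx O ar} {x : ℕ} {T : BT O ar}
    (h : C.plug A = .lam x T) :
    ∃ C', C = .lam x C' ∧ C'.plug A = T := by
  refine (BCtx.plug_eq_lam h).resolve_left ?_
  rintro ⟨-, rfl⟩
  rcases hA with ⟨x, T, S, h⟩ | ⟨o, Ts, h⟩ <;> cases h

theorem plug_eq_bang (hA : IsBBetaRedexOrOp A) {C : BCtx O ar} {T : BT O ar}
    (h : C.plug A = .bang T) :
    ∃ C', C = .bang C' ∧ C'.plug A = T := by
  refine (BCtx.plug_eq_bang h).resolve_left ?_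
  rintro ⟨-, rfl⟩
  rcases hA with ⟨x, T, S, h⟩ | ⟨o, Ts, h⟩ <;> cases h

end IsBBetaRedexOrOp

/-- `C` is compared with `c^v` through `plug`: an operator context keeps an arbitrary argument at
its hole. -/
def RedexesLift (t : Lam O ar) : Prop :=
  ∀ (C : BCtx O ar) (A : BT O ar), IsBBetaRedexOrOp A → cbv t = C.plug A →
    ∃ (c : LCtx O ar) (a : Lam O ar), t = c.plug a ∧ cbv a = A ∧ C.plug = (cbvCtx c).plug

namespace RedexesLift

variable {t₁ t₂ : Lam O ar}

theorem app_of_isValue (hv : t₁.isValue) (h₁ : RedexesLift t₁) (h₂ : RedexesLift t₂) :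
    RedexesLift (.app t₁ t₂) := by
  intro C A hA h
  obtain ⟨T, hT⟩ := exists_cbv_eq_bang_iff.2 hv
  rw [cbv_app_of_eq_bang hT] at h
  rcases BCtx.plug_eq_app h.symm with ⟨rfl, rfl⟩ | ⟨C', rfl, hC'⟩ | ⟨C', rfl, hC'⟩
  · exact ⟨.hole, _, rfl, cbv_app_of_eq_bang hT t₂, rfl⟩
  · obtain ⟨c, a, rfl, rfl, hc⟩ := h₁ (.bang C') _ hA (hT.trans (congrArg BT.bang hC'.symm))
    cases c with
    | hole =>
      obtain ⟨W, hW⟩ := exists_cbv_eq_bang_iff.2 hv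
      rw [LCtx.plug] at hW
      rcases hA with ⟨x, T, S, h⟩ | ⟨o, Ts, h⟩ <;> simp [hW] at h
    | lam x c =>
      refine ⟨.appL (.lam x c) t₂, a, rfl, rfl, funext fun X => ?_⟩
      simpa [BCtx.plug, cbvCtx] using congrFun hc X
    | _ => simp [LCtx.plug, Lam.isValue] at hv
  · obtain ⟨c, a, rfl, rfl, hc⟩ := h₂ C' A hA hC'.symm
    refine ⟨.appR t₁ c, a, rfl, rfl, funext fun X => ?_⟩
    simp [BCtx.plug, cbvCtx_appR_of_eq_bang hT, congrFun hc X]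

theorem app_of_not_isValue (hv : ¬ t₁.isValue) (h₁ : RedexesLift t₁) (h₂ : RedexesLift t₂) :
    RedexesLift (.app t₁ t₂) := by
  intro C A hA h
  rw [cbv_app_of_not_isValue hv] at h
  rcases BCtx.plug_eq_app h.symm with ⟨-, hA'⟩ | ⟨C', rfl, hC'⟩ | ⟨C', rfl, hC'⟩
  · rcases hA with ⟨x, T, S, rfl⟩ | ⟨o, Ts, rfl⟩ <;> simp [der] at hA'
  · rcases BCtx.plug_eq_app hC' with ⟨-, hA'⟩ | ⟨C'', rfl, hC''⟩ | ⟨C'', rfl, hC''⟩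
    · rcases hA with ⟨x, T, S, rfl⟩ | ⟨o, Ts, rfl⟩
      · simp only [BT.app.injEq] at hA'
        exact absurd (exists_cbv_eq_bang_iff.1 ⟨S, hA'.2.symm⟩) hv
      · cases hA'
    · obtain ⟨C₃, -, hC₃⟩ := hA.plug_eq_lam hC''
      exact absurd hC₃ (hA.plug_ne_var C₃ 0)
    · obtain ⟨c, a, rfl, rfl, hc⟩ := h₁ C'' A hA hC''.symm
      have hc_lam : ∀ x c', c ≠ .lam x c' := by
        rintro x c' rfl
        exact hv trivial
      refine ⟨.appL c t₂, a, rfl, rfl, funext fun X => ?_⟩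
      simp [BCtx.plug, cbvCtx_appL_of_ne_lam hc_lam, congrFun hc X]
  · obtain ⟨c, a, rfl, rfl, hc⟩ := h₂ C' A hA hC'.symm
    refine ⟨.appR t₁ c, a, rfl, rfl, funext fun X => ?_⟩
    simp [BCtx.plug, cbvCtx_appR_of_not_isValue hv, congrFun hc X]

end RedexesLift

theorem redexesLift (t : Lam O ar) : RedexesLift t := by
  induction t with
  | var x =>
    intro C A hA h
    obtain ⟨C', -, hC'⟩ := hA.plug_eq_bang h.symm
    exact absurd hC' (hA.plug_ne_var C' x)
  | lam x u ih =>
    intro C A hA h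
    obtain ⟨C', rfl, hC'⟩ := hA.plug_eq_bang h.symm
    obtain ⟨C'', rfl, hC''⟩ := hA.plug_eq_lam hC'
    obtain ⟨c, a, rfl, rfl, hc⟩ := ih C'' A hA hC''.symm
    refine ⟨.lam x c, a, rfl, rfl, funext fun X => ?_⟩
    simp [BCtx.plug, cbvCtx, congrFun hc X]
  | op o ts ih =>
    intro C A hA h
    rcases BCtx.plug_eq_op h.symm with ⟨rfl, rfl⟩ | ⟨Ts', i, C', rfl, hTs⟩
    · exact ⟨.hole, _, rfl, rfl, rfl⟩
    obtain ⟨c, a, hc_eq, rfl, hc⟩ := ih i C' A hA (by simpa using congrFun hTs i)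
    refine ⟨.op o ts i c, a, by simp [LCtx.plug, ← hc_eq], rfl, funext fun X => ?_⟩
    simp only [BCtx.plug, cbvCtx, congrFun hc X, hTs, Function.update_idem]
  | app t₁ t₂ ih₁ ih₂ =>
    by_cases hv : t₁.isValue
    exacts [.app_of_isValue hv ih₁ ih₂, .app_of_not_isValue hv ih₁ ih₂]

theorem bbetaRoot_cbv_of_betavRoot {a b : Lam O ar} (h : betavRoot a b) :
    bbetaRoot (cbv a) (cbv b) := by
  obtain ⟨x, u, V, hV, rfl, rfl⟩ := h
  obtain ⟨W, hW⟩ := exists_cbv_eq_bang_iff.2 hV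
  exact ⟨x, cbv u, W, by rw [cbv_app_of_eq_bang rfl, hW], cbv_subst u x hW⟩

theorem exists_betavRoot_of_bbetaRoot_cbv {a : Lam O ar} {B : BT O ar}
    (h : bbetaRoot (cbv a) B) : ∃ b, B = cbv b ∧ betavRoot a b := by
  obtain ⟨x, T, S, ha, rfl⟩ := h
  cases a with
  | app a₁ a₂ =>
    by_cases hv : a₁.isValue
    · obtain ⟨T₁, hT₁⟩ := exists_cbv_eq_bang_iff.2 hv
      rw [cbv_app_of_eq_bang hT₁, BT.app.injEq] at ha
      obtain ⟨rfl, hS⟩ := ha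
      cases a₁ with
      | lam y u =>
        simp only [cbv, BT.bang.injEq, BT.lam.injEq] at hT₁
        obtain ⟨rfl, rfl⟩ := hT₁
        exact ⟨u.subst y a₂, (cbv_subst u y hS).symm,
          y, u, a₂, exists_cbv_eq_bang_iff.1 ⟨S, hS⟩, rfl, rfl⟩
      | _ => simp [cbv, Lam.isValue] at hv hT₁
    · simp [cbv_app_of_not_isValue hv, der] at ha
  | _ => simp [cbv] at ha

section Simulation

variable {r : Lam O ar → Lam O ar → Prop} {R : BT O ar → BT O ar → Prop}

theorem cbv_step_sound (hval : ∀ a b, r a b → ¬ a.isValue)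
    (hsim : ∀ a b, r a b → R (cbv a) (cbv b)) {t t' : Lam O ar} (h : Lam.Step r t t') :
    ∃ U, BT.Step R (cbv t) U ∧ Relation.ReflGen (BT.Step dRoot) U (cbv t') := by
  obtain ⟨c, a, b, hab, rfl, rfl⟩ := h
  have ha : (cbvCtx c).plug (cbv a) = cbv (c.plug a) :=
    (eqOrDStep_cbvCtx_plug c a).resolve_right fun h => hval a b hab h.1
  exact ⟨_, ⟨cbvCtx c, _, _, hsim a b hab, ha.symm, rfl⟩, (eqOrDStep_cbvCtx_plug c b).reflGen⟩

theorem cbv_step_complete (hshape : ∀ A B, R A B → IsBBetaRedexOrOp A)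
    (hinv : ∀ a B, R (cbv a) B → ∃ b, B = cbv b ∧ r a b) {t : Lam O ar} {S : BT O ar}
    (h : ∃ U, BT.Step R (cbv t) U ∧ Relation.ReflTransGen (BT.Step dRoot) U S ∧ DNormal S) :
    ∃ U t', BT.Step R (cbv t) U ∧ Relation.ReflGen (BT.Step dRoot) U S ∧
      S = cbv t' ∧ Lam.Step r t t' := by
  obtain ⟨_, ⟨C, A, B, hAB, hC, rfl⟩, hUS, hS⟩ := h
  obtain ⟨c, a, rfl, rfl, hc⟩ := redexesLift t C _ (hshape _ B hAB) hC
  obtain ⟨b, rfl, hab⟩ := hinv a B hAB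
  rw [hc] at hUS
  have hS_eq : S = cbv (c.plug b) := by
    rcases eqOrDStep_cbvCtx_plug c b with heq | ⟨-, hstep⟩
    · exact (dNormal_cbv _).eq_of_reflTransGen (heq ▸ hUS)
    · exact (dNormal_cbv _).eq_of_reflTransGen_of_unique_step hstep
        (fun _ => dStep_eq_of_dNormal hstep (dNormal_cbv _)) hUS hS
  refine ⟨_, c.plug b, ⟨C, _, _, hAB, hC, rfl⟩, ?_, hS_eq, c, a, b, hab, rfl, rfl⟩
  rw [hc, hS_eq]
  exact (eqOrDStep_cbvCtx_plug c b).reflGen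

end Simulation

/-- Simulation of CbV in the bang calculus: soundness and completeness for
`→βv` vs `→!β · →d⁼` and for each operator rule `→o` vs `→o · →d⁼`, via the CbV
translation. The operator rule is given both on λ-terms (`lamRule`) and on
bang-terms (`bangRule`, the corresponding rule), with left-hand sides of shape
`o(...)`, corresponding to each other under the CbV translation. -/
theorem cbv_simulation {O : Type} {ar : O → ℕ} (o : O)
    (lamRule : Lam O ar → Lam O ar → Prop) (bangRule : BT O ar → BT O ar → Prop)
    (hshapeL : ∀ a b, lamRule a b → ∃ ts, a = Lam.op o ts)
    (hshapeB : ∀ a b, bangRule a b → ∃ Ts, a = BT.op o Ts)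
    (hsound : ∀ a b, lamRule a b → bangRule (cbv a) (cbv b))
    (hcomplete : ∀ a S, bangRule (cbv a) S → ∃ b, S = cbv b ∧ lamRule a b) :
    -- CbV soundness for βv
    (∀ t t' : Lam O ar, Lam.Step betavRoot t t' →
      (∃ U, BT.Step bbetaRoot (cbv t) U ∧ Relation.ReflGen (BT.Step dRoot) U (cbv t')) ∧
      Normal (BT.Step dRoot) (cbv t')) ∧
    -- CbV soundness for o
    (∀ t t' : Lam O ar, Lam.Step lamRule t t' →
      (∃ U, BT.Step bangRule (cbv t) U ∧ Relation.ReflGen (BT.Step dRoot) U (cbv t')) ∧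
      Normal (BT.Step dRoot) (cbv t')) ∧
    -- CbV completeness for βv
    (∀ (t : Lam O ar) (S : BT O ar),
      (∃ U, BT.Step bbetaRoot (cbv t) U ∧ Relation.ReflTransGen (BT.Step dRoot) U S ∧
        Normal (BT.Step dRoot) S) →
      ∃ U t', BT.Step bbetaRoot (cbv t) U ∧ Relation.ReflGen (BT.Step dRoot) U S ∧
        S = cbv t' ∧ Lam.Step betavRoot t t') ∧
    -- CbV completeness for o
    (∀ (t : Lam O ar) (S : BT O ar),
      (∃ U, BT.Step bangRule (cbv t) U ∧ Relation.ReflTransGen (BT.Step dRoot) U S ∧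
        Normal (BT.Step dRoot) S) →
      ∃ U t', BT.Step bangRule (cbv t) U ∧ Relation.ReflGen (BT.Step dRoot) U S ∧
        S = cbv t' ∧ Lam.Step lamRule t t') := by
  have hval_op : ∀ a b, lamRule a b → ¬ a.isValue := fun a b h => by
    obtain ⟨ts, rfl⟩ := hshapeL a b h
    simp [Lam.isValue]
  have hval_betav : ∀ a b : Lam O ar, betavRoot a b → ¬ a.isValue := by
    rintro _ _ ⟨x, u, V, -, rfl, -⟩
    simp [Lam.isValue]
  have hshape_bbeta : ∀ A B : BT O ar, bbetaRoot A B → IsBBetaRedexOrOp A := by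
    rintro _ _ ⟨x, T, S, rfl, -⟩
    exact .inl ⟨x, T, S, rfl⟩
  refine ⟨fun t t' h => ⟨?_, dNormal_cbv t'⟩, fun t t' h => ⟨?_, dNormal_cbv t'⟩,
    fun t S h => ?_, fun t S h => ?_⟩
  · exact cbv_step_sound hval_betav (fun _ _ => bbetaRoot_cbv_of_betavRoot) h
  · exact cbv_step_sound hval_op hsound h
  · exact cbv_step_complete hshape_bbeta (fun _ _ => exists_betavRoot_of_bbetaRoot_cbv) h
  · exact cbv_step_complete (fun A B h => .inr ⟨o, hshapeB A B h⟩) hcomplete h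

end BangPaper
end
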